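/- Let g : ℝ → ℝ agree with a polynomial of degree at most 5 on (−∞, 1/2] and with a polynomial of degree at most 5 on [1/2, ∞), and be three times continuously differentiable at 1/2. Then g'''(1/2) = 120(g(0)−g(1)) + 60(g'(0)+g'(1)) + (21/2)(g''(0)−g''(1)) + (3/4)(g'''(0)+g'''(1)). -/
import Mathlib
open Polynomial Set Filter Topology

lemma polyIterDeriv (p : ℝ[X]) (n : ℕ) :
    iteratedDeriv n (fun x => p.eval x) = fun x => (Polynomial.derivative^[n] p).eval x := by
  induction n generalizing p with
  | zero => simp
  | succ n ih =>
    rw [iteratedDeriv_succ']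
    have : deriv (fun x => p.eval x) = fun x => (Polynomial.derivative p).eval x :=
      funext fun x => Polynomial.deriv p
    rw [this, ih, Function.iterate_succ_apply]

lemma iterWithin_open {f : ℝ → ℝ} {s : Set ℝ} {x : ℝ} (n : ℕ) (hs : IsOpen s) (hx : x ∈ s) :
    iteratedDerivWithin n f s x = iteratedDeriv n f x := by
  rw [iteratedDerivWithin_eq_iteratedFDerivWithin, iteratedDeriv_eq_iteratedFDeriv,
    iteratedFDerivWithin_of_isOpen n hs hx]
lemma degIter (p : ℝ[X]) (h : p.natDegree < 6) (k : ℕ) :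
    (Polynomial.derivative^[k] p).natDegree < 6 := by
  induction k with
  | zero => simpa
  | succ k ih =>
    rw [Function.iterate_succ_apply']
    exact lt_of_le_of_lt (Polynomial.natDegree_derivative_le _) (by omega)

lemma ev0 (p : ℝ[X]) (h : p.natDegree < 6) (x : ℝ) :
    p.eval x = p.coeff 0 + p.coeff 1 * x + p.coeff 2 * x^2 + p.coeff 3 * x^3
      + p.coeff 4 * x^4 + p.coeff 5 * x^5 := by
  rw [Polynomial.eval_eq_sum_range' h]
  simp [Finset.sum_range_succ]

lemma ev1 (p : ℝ[X]) (h : p.natDegree < 6) (x : ℝ) :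
    (Polynomial.derivative^[1] p).eval x = p.coeff 1 + 2*p.coeff 2 * x + 3*p.coeff 3 * x^2
      + 4*p.coeff 4 * x^3 + 5*p.coeff 5 * x^4 := by
  have c6 : p.coeff 6 = 0 := Polynomial.coeff_eq_zero_of_natDegree_lt (by omega)
  rw [Polynomial.eval_eq_sum_range' (degIter p h 1)]
  simp [Finset.sum_range_succ, Polynomial.coeff_derivative, c6]
  ring

lemma ev2 (p : ℝ[X]) (h : p.natDegree < 6) (x : ℝ) :
    (Polynomial.derivative^[2] p).eval x = 2*p.coeff 2 + 6*p.coeff 3 * x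
      + 12*p.coeff 4 * x^2 + 20*p.coeff 5 * x^3 := by
  have c6 : p.coeff 6 = 0 := Polynomial.coeff_eq_zero_of_natDegree_lt (by omega)
  have c7 : p.coeff 7 = 0 := Polynomial.coeff_eq_zero_of_natDegree_lt (by omega)
  rw [Polynomial.eval_eq_sum_range' (degIter p h 2)]
  simp [Finset.sum_range_succ, Polynomial.coeff_derivative, c6, c7]
  ring

lemma ev3 (p : ℝ[X]) (h : p.natDegree < 6) (x : ℝ) :
    (Polynomial.derivative^[3] p).eval x = 6*p.coeff 3 + 24*p.coeff 4 * x
      + 60*p.coeff 5 * x^2 := by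
  have c6 : p.coeff 6 = 0 := Polynomial.coeff_eq_zero_of_natDegree_lt (by omega)
  have c7 : p.coeff 7 = 0 := Polynomial.coeff_eq_zero_of_natDegree_lt (by omega)
  have c8 : p.coeff 8 = 0 := Polynomial.coeff_eq_zero_of_natDegree_lt (by omega)
  rw [Polynomial.eval_eq_sum_range' (degIter p h 3)]
  simp [Finset.sum_range_succ, Polynomial.coeff_derivative, c6, c7, c8]
  ring

theorem midpoint_third_derivative_rule (g : ℝ → ℝ) (p q : Polynomial ℝ)
    (hp : p.degree ≤ 5) (hq : q.degree ≤ 5)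
    (hgp : ∀ x : ℝ, x ≤ 1/2 → g x = p.eval x)
    (hgq : ∀ x : ℝ, 1/2 ≤ x → g x = q.eval x)
    (hc : ContDiffAt ℝ 3 g (1/2)) :
    iteratedDeriv 3 g (1/2) = 120 * (g 0 - g 1) + 60 * (deriv g 0 + deriv g 1) + (21/2) * (iteratedDeriv 2 g 0 - iteratedDeriv 2 g 1) + (3/4) * (iteratedDeriv 3 g 0 + iteratedDeriv 3 g 1) := by
  have hp6 : p.natDegree < 6 := by
    have h5 : p.natDegree ≤ 5 := Polynomial.natDegree_le_iff_degree_le.mpr (by exact_mod_cast hp)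
    omega
  have hq6 : q.natDegree < 6 := by
    have h5 : q.natDegree ≤ 5 := Polynomial.natDegree_le_iff_degree_le.mpr (by exact_mod_cast hq)
    omega
  have hgl : ∀ x < (1/2:ℝ), ∀ k : ℕ, iteratedDeriv k g x = (Polynomial.derivative^[k] p).eval x := by
    intro x hx k
    have hev : g =ᶠ[𝓝 x] fun y => p.eval y := by
      filter_upwards [Iio_mem_nhds hx] with y hy using hgp y (le_of_lt hy)
    rw [hev.iteratedDeriv_eq, polyIterDeriv]
  have hgr : ∀ x, (1/2:ℝ) < x → ∀ k : ℕ, iteratedDeriv k g x = (Polynomial.derivative^[k] q).eval x := by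
    intro x hx k
    have hev : g =ᶠ[𝓝 x] fun y => q.eval y := by
      filter_upwards [Ioi_mem_nhds hx] with y hy using hgq y (le_of_lt hy)
    rw [hev.iteratedDeriv_eq, polyIterDeriv]
  obtain ⟨u, hu, hcu⟩ := hc.contDiffOn le_rfl (by simp)
  have hso : IsOpen (interior u) := isOpen_interior
  have hxs : (1/2:ℝ) ∈ interior u := mem_interior_iff_mem_nhds.mpr hu
  have hcs : ContDiffOn ℝ 3 g (interior u) := hcu.mono interior_subset
  have hcont : ∀ k : ℕ, k ≤ 3 → ContinuousAt (iteratedDeriv k g) (1/2) := by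
    intro k hk
    have h1 : ContinuousOn (iteratedDerivWithin k g (interior u)) (interior u) :=
      hcs.continuousOn_iteratedDerivWithin (by exact_mod_cast hk) hso.uniqueDiffOn
    exact (h1.congr fun x hx => (iterWithin_open k hso hx).symm).continuousAt (hso.mem_nhds hxs)
  have key : ∀ k : ℕ, k ≤ 3 →
      (Polynomial.derivative^[k] p).eval (1/2) = (Polynomial.derivative^[k] q).eval (1/2)
      ∧ iteratedDeriv k g (1/2) = (Polynomial.derivative^[k] q).eval (1/2) := by
    intro k hk
    have hL : iteratedDeriv k g (1/2) = (Polynomial.derivative^[k] p).eval (1/2) := by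
      have t1 : Tendsto (iteratedDeriv k g) (𝓝[<] (1/2:ℝ)) (𝓝 (iteratedDeriv k g (1/2))) :=
        ((hcont k hk).tendsto).mono_left nhdsWithin_le_nhds
      have t2 : Tendsto (iteratedDeriv k g) (𝓝[<] (1/2:ℝ))
          (𝓝 ((Polynomial.derivative^[k] p).eval (1/2))) := by
        have tp : Tendsto (fun x => (Polynomial.derivative^[k] p).eval x) (𝓝[<] (1/2:ℝ))
            (𝓝 ((Polynomial.derivative^[k] p).eval (1/2))) :=
          ((Polynomial.derivative^[k] p).continuous_aeval.tendsto _).mono_left nhdsWithin_le_nhds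
        refine tp.congr' ?_
        filter_upwards [self_mem_nhdsWithin] with x hx
        exact (hgl x hx k).symm
      exact tendsto_nhds_unique t1 t2
    have hR : iteratedDeriv k g (1/2) = (Polynomial.derivative^[k] q).eval (1/2) := by
      have t1 : Tendsto (iteratedDeriv k g) (𝓝[>] (1/2:ℝ)) (𝓝 (iteratedDeriv k g (1/2))) :=
        ((hcont k hk).tendsto).mono_left nhdsWithin_le_nhds
      have t2 : Tendsto (iteratedDeriv k g) (𝓝[>] (1/2:ℝ))
          (𝓝 ((Polynomial.derivative^[k] q).eval (1/2))) := by
        have tp : Tendsto (fun x => (Polynomial.derivative^[k] q).eval x) (𝓝[>] (1/2:ℝ))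
            (𝓝 ((Polynomial.derivative^[k] q).eval (1/2))) :=
          ((Polynomial.derivative^[k] q).continuous_aeval.tendsto _).mono_left nhdsWithin_le_nhds
        refine tp.congr' ?_
        filter_upwards [self_mem_nhdsWithin] with x hx
        exact (hgr x hx k).symm
      exact tendsto_nhds_unique t1 t2
    exact ⟨hL.symm.trans hR, hR⟩
  -- values at 0 and 1
  have v0 : g 0 = p.eval 0 := hgp 0 (by norm_num)
  have v1 : g 1 = q.eval 1 := hgq 1 (by norm_num)
  have d0 : deriv g 0 = (Polynomial.derivative^[1] p).eval 0 := by
    rw [← iteratedDeriv_one]; exact hgl 0 (by norm_num) 1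
  have d1 : deriv g 1 = (Polynomial.derivative^[1] q).eval 1 := by
    rw [← iteratedDeriv_one]; exact hgr 1 (by norm_num) 1
  have s0 : iteratedDeriv 2 g 0 = (Polynomial.derivative^[2] p).eval 0 := hgl 0 (by norm_num) 2
  have s1 : iteratedDeriv 2 g 1 = (Polynomial.derivative^[2] q).eval 1 := hgr 1 (by norm_num) 2
  have w0 : iteratedDeriv 3 g 0 = (Polynomial.derivative^[3] p).eval 0 := hgl 0 (by norm_num) 3
  have w1 : iteratedDeriv 3 g 1 = (Polynomial.derivative^[3] q).eval 1 := hgr 1 (by norm_num) 3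
  obtain ⟨E0, -⟩ := key 0 (by norm_num)
  obtain ⟨E1, -⟩ := key 1 (by norm_num)
  obtain ⟨E2, -⟩ := key 2 (by norm_num)
  obtain ⟨E3, H3⟩ := key 3 le_rfl
  rw [H3, v0, v1, d0, d1, s0, s1, w0, w1]
  simp only [Function.iterate_zero_apply] at E0
  rw [ev0 p hp6, ev0 q hq6] at E0
  rw [ev1 p hp6, ev1 q hq6] at E1
  rw [ev2 p hp6, ev2 q hq6] at E2
  rw [ev3 p hp6, ev3 q hq6] at E3
  rw [ev0 p hp6, ev0 q hq6, ev1 p hp6, ev1 q hq6, ev2 p hp6, ev2 q hq6,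
    ev3 p hp6, ev3 q hq6, ev3 q hq6]
  norm_num at E0 E1 E2 E3 ⊢
  linarith [E0, E1, E2, E3]
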